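/- arXiv:1311.6636 — 3 statements merged into one kernel-verified Lean document; each statement's English description precedes it below -/
import Mathlib

section
/- For the ordinary least squares estimator in a linear model, the Cook's distance D_k = (β̂^{(k)} - β̂)ᵀ XᵀX (β̂^{(k)} - β̂) / ((p+1)σ̂²) admits the closed-form expression D_k = (ε̂_k² / ((p+1)σ̂²)) · h_{kk}/(1 - h_{kk})², where ε̂_k = Ŷ_k - Y_k is the k-th residual and h_{kk} = X_kᵀ(XᵀX)⁻¹X_k is the k-th diagonal element of the hat matrix X(XᵀX)⁻¹Xᵀ. -/
open Matrix

lemma sum_subtype_ne' {n : ℕ} (k : Fin n) (f : Fin n → ℝ) :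
    ∑ i : {i : Fin n // i ≠ k}, f i.1 = (∑ i, f i) - f k := by
  rw [← Finset.sum_subtype (Finset.univ.erase k) (fun i => by simp [Finset.mem_erase]) f]
  rw [Finset.sum_erase_eq_sub (Finset.mem_univ k)]

lemma outer_mulVec' {m : ℕ} (u v w : Fin m → ℝ) :
    (vecMulVec u v).mulVec w = (v ⬝ᵥ w) • u := by
  funext i
  simp [vecMulVec_apply, mulVec, dotProduct, Finset.sum_mul, Finset.mul_sum]
  ring_nf

/-- Closed-form expression for Cook's distance:
`D_k = (ε̂_k² / ((p+1) σ̂²)) · h_kk / (1 - h_kk)²`. -/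
theorem cooks_distance_closed_form (n p : ℕ) (k : Fin n)
    (X : Matrix (Fin n) (Fin (p + 1)) ℝ) (Y : Fin n → ℝ)
    (hX : IsUnit (Xᵀ * X).det)
    -- the design matrix with the k-th row deleted
    (Xk : Matrix {i : Fin n // i ≠ k} (Fin (p + 1)) ℝ)
    (hXk : ∀ (i : {i : Fin n // i ≠ k}) (j : Fin (p + 1)), Xk i j = X i.1 j)
    (Yk : {i : Fin n // i ≠ k} → ℝ) (hYk : ∀ i, Yk i = Y i.1)
    (hXkinv : IsUnit (Xkᵀ * Xk).det)
    -- full-data and leave-one-out least squares estimates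
    (βhat βhatk : Fin (p + 1) → ℝ)
    (hβ : βhat = ((Xᵀ * X)⁻¹ * Xᵀ).mulVec Y)
    (hβk : βhatk = ((Xkᵀ * Xk)⁻¹ * Xkᵀ).mulVec Yk)
    -- residual, residual variance estimate, leverage
    (εhat σ2hat hkk Dk : ℝ)
    (hε : εhat = X.mulVec βhat k - Y k)
    (hσ : σ2hat = (1 / ((n : ℝ) - (p : ℝ) - 1)) * ∑ i, (Y i - X.mulVec βhat i) ^ 2)
    (hh : hkk = (X k) ⬝ᵥ (Xᵀ * X)⁻¹.mulVec (X k))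
    (hne : hkk ≠ 1)
    (hD : Dk = ((βhatk - βhat) ⬝ᵥ (Xᵀ * X).mulVec (βhatk - βhat))
      / (((p : ℝ) + 1) * σ2hat)) :
    Dk = (εhat ^ 2 / (((p : ℝ) + 1) * σ2hat)) * (hkk / (1 - hkk) ^ 2) := by
  have hAB : (Xᵀ * X) * (Xᵀ * X)⁻¹ = 1 := Matrix.mul_nonsing_inv _ hX
  have hAkinv : (Xkᵀ * Xk)⁻¹ * (Xkᵀ * Xk) = 1 := Matrix.nonsing_inv_mul _ hXkinv
  have h1mh : (1 : ℝ) - hkk ≠ 0 := sub_ne_zero.mpr (Ne.symm hne)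
  -- rank-one update identities
  have hAk : Xkᵀ * Xk = Xᵀ * X - vecMulVec (X k) (X k) := by
    ext i j
    simp only [Matrix.mul_apply, Matrix.transpose_apply, Matrix.sub_apply, vecMulVec_apply]
    rw [show (∑ a : {i : Fin n // i ≠ k}, Xk a i * Xk a j)
        = ∑ a : {i : Fin n // i ≠ k}, X a.1 i * X a.1 j from
        Finset.sum_congr rfl fun a _ => by rw [hXk, hXk],
      sum_subtype_ne' k (fun a => X a i * X a j)]
  have hXkY : Xkᵀ.mulVec Yk = Xᵀ.mulVec Y - Y k • X k := by
    funext i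
    simp only [Matrix.mulVec, dotProduct, Matrix.transpose_apply, Pi.sub_apply,
      Pi.smul_apply, smul_eq_mul]
    rw [show (∑ a : {i : Fin n // i ≠ k}, Xk a i * Yk a)
        = ∑ a : {i : Fin n // i ≠ k}, X a.1 i * Y a.1 from
        Finset.sum_congr rfl fun a _ => by rw [hXk, hYk],
      sum_subtype_ne' k (fun a => X a i * Y a)]
    ring
  -- normal equations
  have hAβ : (Xᵀ * X).mulVec βhat = Xᵀ.mulVec Y := by
    rw [hβ, Matrix.mulVec_mulVec, ← Matrix.mul_assoc, hAB, Matrix.one_mul]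
  have hAkβk : (Xkᵀ * Xk).mulVec βhatk = Xkᵀ.mulVec Yk := by
    rw [hβk, Matrix.mulVec_mulVec, ← Matrix.mul_assoc,
      Matrix.mul_nonsing_inv _ hXkinv, Matrix.one_mul]
  have hεu : εhat = (X k) ⬝ᵥ βhat - Y k := by
    rw [hε]; rfl
  -- the difference satisfies the rank-one equation
  have hδ : (Xkᵀ * Xk).mulVec (βhatk - βhat) = εhat • (X k) := by
    rw [Matrix.mulVec_sub, hAkβk, hXkY]
    rw [hAk, Matrix.sub_mulVec, hAβ, outer_mulVec', hεu]
    funext i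
    simp only [Pi.sub_apply, Pi.smul_apply, smul_eq_mul]
    ring
  -- the explicit candidate satisfies the same equation
  have hABu : (Xᵀ * X).mulVec ((Xᵀ * X)⁻¹.mulVec (X k)) = X k := by
    rw [Matrix.mulVec_mulVec, hAB, Matrix.one_mulVec]
  have hδ0 : (Xkᵀ * Xk).mulVec ((εhat / (1 - hkk)) • (Xᵀ * X)⁻¹.mulVec (X k))
      = εhat • (X k) := by
    rw [hAk, Matrix.sub_mulVec, Matrix.mulVec_smul, Matrix.mulVec_smul, hABu,
      outer_mulVec']
    rw [← hh]
    funext i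
    simp only [Pi.sub_apply, Pi.smul_apply, smul_eq_mul]
    field_simp
  -- conclude the difference equals the candidate
  have hkey : βhatk - βhat = (εhat / (1 - hkk)) • (Xᵀ * X)⁻¹.mulVec (X k) := by
    have h2 := congrArg (fun v => ((Xkᵀ * Xk)⁻¹).mulVec v) (hδ.trans hδ0.symm)
    simpa [Matrix.mulVec_mulVec, hAkinv, Matrix.one_mulVec] using h2
  -- compute the quadratic form
  have hquad : (βhatk - βhat) ⬝ᵥ (Xᵀ * X).mulVec (βhatk - βhat)
      = (εhat / (1 - hkk)) ^ 2 * hkk := by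
    rw [hkey, Matrix.mulVec_smul, hABu, smul_dotProduct, dotProduct_smul,
      dotProduct_comm, ← hh]
    simp only [smul_eq_mul]
    ring
  rw [hD, hquad]
  have hfin : (εhat / (1 - hkk)) ^ 2 * hkk = εhat ^ 2 * (hkk / (1 - hkk) ^ 2) := by
    field_simp
  rw [hfin, mul_div_right_comm]
end

section
/- Under the standardized i.i.d. setup, E(D_k) = E(B₁ + B₂ + B₃ - 2B₄) = (p n(n-1))⁻¹ Σ_{j=1}^p Var(Y₁ X_{1j}). -/
/-!
Write `Z_i = Y_i X_{ij}` and `Z̄` for the mean of the `Z_i` with `i ≠ k`. Then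
`ρ̂_j - ρ̂_j^{(k)} = n⁻¹ (Z_k - Z̄)`, and `Z_k - Z̄` is centred, so its second moment is its
variance, which by pairwise independence is `(1 + (n - 1)⁻¹) Var(Z_1) = n (n - 1)⁻¹ Var(Z_1)`.
-/

open MeasureTheory ProbabilityTheory Finset

section

variable {Ω : Type*} [MeasurableSpace Ω] {μ : Measure Ω}

lemma MeasureTheory.MemLp.mul_of_four {f g : Ω → ℝ} (hf : MemLp f 4 μ) (hg : MemLp g 4 μ) :
    MemLp (fun ω => f ω * g ω) 2 μ :=
  haveI : ENNReal.HolderTriple 4 4 2 := ⟨by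
    rw [show (4 : ENNReal) = 2 * 2 by norm_num, ENNReal.mul_inv (by simp) (by simp), ← add_mul,
      ENNReal.inv_two_add_inv_two, one_mul]⟩
  hg.mul' hf

lemma integral_sq_sub_average_of_identDistrib [IsProbabilityMeasure μ] {ι : Type*}
    {Z : ι → Ω → ℝ} {k : ι} {s : Finset ι} (hks : k ∉ s) (hs : s.Nonempty)
    (hZk : MemLp (Z k) 2 μ) (hident : ∀ i ∈ s, IdentDistrib (Z i) (Z k) μ μ)
    (hindep : Set.Pairwise (insert k s : Set ι) fun i j => IndepFun (Z i) (Z j) μ) :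
    ∫ ω, (Z k ω - (#s : ℝ)⁻¹ * ∑ i ∈ s, Z i ω) ^ 2 ∂μ = (1 + (#s : ℝ)⁻¹) * Var[Z k; μ] := by
  have hZ : ∀ i ∈ s, MemLp (Z i) 2 μ := fun i hi => (hident i hi).symm.memLp_snd hZk
  have hsum : MemLp (∑ i ∈ s, Z i) 2 μ := memLp_finsetSum' s hZ
  have hcard : (#s : ℝ) ≠ 0 := Nat.cast_ne_zero.2 hs.card_pos.ne'
  have hW : (fun ω => Z k ω - (#s : ℝ)⁻¹ * ∑ i ∈ s, Z i ω)
      = Z k - (#s : ℝ)⁻¹ • ∑ i ∈ s, Z i := by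
    ext; simp [Finset.sum_apply]
  have hmean : ∫ ω, Z k ω - (#s : ℝ)⁻¹ * ∑ i ∈ s, Z i ω ∂μ = 0 := by
    rw [integral_sub (hZk.integrable one_le_two)
        ((integrable_finsetSum s fun i hi => (hZ i hi).integrable one_le_two).const_mul _),
      integral_const_mul, integral_finsetSum s fun i hi => (hZ i hi).integrable one_le_two,
      sum_congr rfl fun i hi => (hident i hi).integral_eq, sum_const, nsmul_eq_mul]
    field_simp
    ring
  have hcov : cov[Z k, ∑ i ∈ s, Z i; μ] = 0 := by
    rw [covariance_sum_right' hZ hZk]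
    refine sum_eq_zero fun i hi => ?_
    exact (hindep (Set.mem_insert k _) (Set.mem_insert_of_mem k hi)
      (ne_of_mem_of_not_mem hi hks).symm).covariance_eq_zero hZk (hZ i hi)
  have hvar : Var[∑ i ∈ s, Z i; μ] = #s * Var[Z k; μ] := by
    rw [IndepFun.variance_sum hZ (hindep.mono (by simp)),
      sum_congr rfl fun i hi => (hident i hi).variance_eq, sum_const, nsmul_eq_mul]
  rw [← variance_of_integral_eq_zero (hW ▸ (hZk.sub (hsum.const_smul _)).aemeasurable) hmean, hW,
    variance_sub hZk (hsum.const_smul _), covariance_smul_right, variance_smul, hcov, hvar]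
  field_simp
  ring

lemma integral_sq_mean_sub_leaveOneOut_mean [IsProbabilityMeasure μ] {ι : Type*} [Fintype ι]
    [DecidableEq ι] {Z : ι → Ω → ℝ} (k : ι) (hcard : 2 ≤ Fintype.card ι)
    (hZk : MemLp (Z k) 2 μ) (hident : ∀ i, IdentDistrib (Z i) (Z k) μ μ)
    (hindep : Pairwise fun i j => IndepFun (Z i) (Z j) μ) :
    ∫ ω, ((Fintype.card ι : ℝ)⁻¹ * ∑ i, Z i ω
        - ((Fintype.card ι : ℝ) - 1)⁻¹ * ∑ i ∈ univ.erase k, Z i ω) ^ 2 ∂μ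
      = Var[Z k; μ] / (Fintype.card ι * (Fintype.card ι - 1)) := by
  have hN : (2 : ℝ) ≤ Fintype.card ι := by exact_mod_cast hcard
  set N : ℝ := (Fintype.card ι : ℝ)
  have herase : (#(univ.erase k) : ℝ) = N - 1 := by
    rw [card_erase_of_mem (mem_univ k), card_univ, Nat.cast_sub (by omega), Nat.cast_one]
  have hnonempty : (univ.erase k).Nonempty := by
    rw [← card_pos, card_erase_of_mem (mem_univ k), card_univ]; omega
  have hpoint : ∀ ω, N⁻¹ * ∑ i, Z i ω - (N - 1)⁻¹ * ∑ i ∈ univ.erase k, Z i ω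
      = N⁻¹ * (Z k ω - (#(univ.erase k) : ℝ)⁻¹ * ∑ i ∈ univ.erase k, Z i ω) := by
    intro ω
    rw [← add_sum_erase univ _ (mem_univ k), herase]
    field_simp [show N - 1 ≠ 0 by linarith]
    ring
  simp_rw [hpoint, mul_pow]
  rw [integral_const_mul, integral_sq_sub_average_of_identDistrib (notMem_erase k univ) hnonempty
    hZk (fun i _ => hident i) (hindep.set_pairwise _), herase]
  field_simp [show N - 1 ≠ 0 by linarith]
  ring

end

theorem expectation_of_him_general
    {Ω : Type*} [MeasurableSpace Ω] (μ : Measure Ω) [IsProbabilityMeasure μ]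
    (n p : ℕ) (hn : 3 ≤ n) (k i₀ : Fin n)
    (X : Fin n → Ω → Fin p → ℝ) (Y : Fin n → Ω → ℝ)
    (hindep : iIndepFun (fun i ω => (X i ω, Y i ω)) μ)
    (hident : ∀ i, IdentDistrib (fun ω => (X i ω, Y i ω))
      (fun ω => (X i₀ ω, Y i₀ ω)) μ μ)
    (hX4 : ∀ i j, MemLp (fun ω => X i ω j) 4 μ)
    (hY4 : ∀ i, MemLp (Y i) 4 μ)
    -- the influence measure D_k built from leave-one-out marginal correlations
    (ρhat : Fin p → Ω → ℝ)
    (hρ : ∀ j ω, ρhat j ω = (1 / (n : ℝ)) * ∑ i, X i ω j * Y i ω)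
    (ρhatk : Fin p → Ω → ℝ)
    (hρk : ∀ j ω, ρhatk j ω
      = (1 / ((n : ℝ) - 1)) * ∑ i ∈ univ.erase k, X i ω j * Y i ω)
    (D : Ω → ℝ)
    (hD : ∀ ω, D ω = (1 / (p : ℝ)) * ∑ j, (ρhat j ω - ρhatk j ω) ^ 2) :
    ∫ ω, D ω ∂μ = (1 / ((p : ℝ) * (n : ℝ) * ((n : ℝ) - 1))) *
      ∑ j, (∫ ω, (Y i₀ ω * X i₀ ω j) ^ 2 ∂μ - (∫ ω, Y i₀ ω * X i₀ ω j ∂μ) ^ 2) := by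
  set Z : Fin p → Fin n → Ω → ℝ := fun j i ω => Y i ω * X i ω j
  have hφ : ∀ j : Fin p, Measurable fun q : (Fin p → ℝ) × ℝ => q.2 * q.1 j :=
    fun j => measurable_snd.mul ((measurable_pi_apply j).comp measurable_fst)
  have hZ : ∀ j i, MemLp (Z j i) 2 μ := fun j i => (hY4 i).mul_of_four (hX4 i j)
  have hZident : ∀ j i, IdentDistrib (Z j i) (Z j k) μ μ := fun j i =>
    ((hident i).trans (hident k).symm).comp (hφ j)
  have hZindep : ∀ j, Pairwise fun i l => IndepFun (Z j i) (Z j l) μ := fun j _ _ hil =>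
    (hindep.indepFun hil).comp (hφ j) (hφ j)
  have hD' : ∀ ω, D ω = (p : ℝ)⁻¹ * ∑ j,
      ((n : ℝ)⁻¹ * ∑ i, Z j i ω - ((n : ℝ) - 1)⁻¹ * ∑ i ∈ univ.erase k, Z j i ω) ^ 2 := by
    intro ω
    simp only [hD, hρ, hρk, one_div, Z, mul_comm (Y _ _)]
  have hsq_int : ∀ j, Integrable (fun ω =>
      ((n : ℝ)⁻¹ * ∑ i, Z j i ω - ((n : ℝ) - 1)⁻¹ * ∑ i ∈ univ.erase k, Z j i ω) ^ 2) μ :=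
    fun j => (((memLp_finsetSum _ fun i _ => hZ j i).const_mul _).sub
      ((memLp_finsetSum _ fun i _ => hZ j i).const_mul _)).integrable_sq
  have hsq_eq := fun j => integral_sq_mean_sub_leaveOneOut_mean k
    (by rw [Fintype.card_fin]; omega) (hZ j k) (hZident j) (hZindep j)
  simp only [Fintype.card_fin] at hsq_eq
  have hn1 : (n : ℝ) - 1 ≠ 0 := by
    have : (3 : ℝ) ≤ n := by exact_mod_cast hn
    linarith
  simp_rw [hD']
  rw [integral_const_mul, integral_finsetSum _ fun j _ => hsq_int j]
  simp_rw [hsq_eq, ← (hZident _ i₀).variance_eq, variance_eq_sub (hZ _ i₀), ← sum_div]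
  simp only [Pi.pow_apply, Z]
  field_simp

/-- Expectation of the high-dimensional influence measure under the
standardized i.i.d. setup:
`E(D_k) = (p n (n-1))⁻¹ ∑_j Var(Y₁ X_{1j})`. -/
theorem expectation_of_him
    {Ω : Type*} [MeasurableSpace Ω] (μ : Measure Ω) [IsProbabilityMeasure μ]
    (n p : ℕ) (hn : 3 ≤ n) (hp : 1 ≤ p) (k i₀ : Fin n) (hi₀ : (i₀ : ℕ) = 0)
    (X : Fin n → Ω → Fin p → ℝ) (Y : Fin n → Ω → ℝ)
    (hmeas : ∀ i, Measurable (fun ω => (X i ω, Y i ω)))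
    (hindep : iIndepFun (fun i ω => (X i ω, Y i ω)) μ)
    (hident : ∀ i, IdentDistrib (fun ω => (X i ω, Y i ω))
      (fun ω => (X i₀ ω, Y i₀ ω)) μ μ)
    (hX4 : ∀ i j, MemLp (fun ω => X i ω j) 4 μ)
    (hY4 : ∀ i, MemLp (Y i) 4 μ)
    (hXmean : ∀ j, ∫ ω, X i₀ ω j ∂μ = 0) (hYmean : ∫ ω, Y i₀ ω ∂μ = 0)
    -- the influence measure D_k built from leave-one-out marginal correlations
    (ρhat : Fin p → Ω → ℝ)
    (hρ : ∀ j ω, ρhat j ω = (1 / (n : ℝ)) * ∑ i, X i ω j * Y i ω)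
    (ρhatk : Fin p → Ω → ℝ)
    (hρk : ∀ j ω, ρhatk j ω
      = (1 / ((n : ℝ) - 1)) * ∑ i ∈ univ.erase k, X i ω j * Y i ω)
    (D : Ω → ℝ)
    (hD : ∀ ω, D ω = (1 / (p : ℝ)) * ∑ j, (ρhat j ω - ρhatk j ω) ^ 2) :
    ∫ ω, D ω ∂μ = (1 / ((p : ℝ) * (n : ℝ) * ((n : ℝ) - 1))) *
      ∑ j, (∫ ω, (Y i₀ ω * X i₀ ω j) ^ 2 ∂μ - (∫ ω, Y i₀ ω * X i₀ ω j ∂μ) ^ 2) :=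
  expectation_of_him_general μ n p hn k i₀ X Y hindep hident hX4 hY4 ρhat hρ ρhatk hρk D hD
end

section
/- Under the standardized i.i.d. setup, E(B₄²) = (n²(n-1)³)⁻¹ C₁ + (n-2)(n²(n-1)³)⁻¹ C₂, where C₁ = E(Y₁²Y₂²K_{p,12}²) and C₂ = E[Y₁²(Σ_{j=1}^p ρ_j X_{1j}/p)²], with B₄ = (n(n-1)²)⁻¹ Σ_{t≠k} Y_kY_tK_{p,tk} and K_{p,tk} = p⁻¹Σ_j X_{tj}X_{kj}. -/
/-!
Squaring `B₄` gives `(n(n-1)²)⁻²` times a double sum over `t, s ≠ k` of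
`Y_k² Y_t Y_s K_{tk} K_{sk}`. For the `n - 1` diagonal terms the pair of observations `(t, k)` is
independent with identically distributed coordinates, so it has the law of `(a, b)` and the
expectation is `C₁`. For the `(n-1)(n-2)` off-diagonal terms, expanding both kernels in
coordinates factors every summand over the three independent observations `t, s, k`; then
`E(Y_t X_{tj}) = ρ_j` and the expectation is `C₂`. Fourth moments make each summand integrable by
Hölder's inequality.
-/

open MeasureTheory ProbabilityTheory Finset

instance : ENNReal.HolderTriple 4 4 2 :=
  ⟨by rw [← two_mul, show (4 : ENNReal) = 2 * 2 by norm_num, ENNReal.mul_inv (by simp) (by simp),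
    ← mul_assoc, ENNReal.mul_inv_cancel (by simp) (by simp), one_mul]⟩

theorem Finset.sum_sum_ite_eq_mul {ι R : Type*} [DecidableEq ι] [CommRing R] (S : Finset ι)
    (a b : R) :
    ∑ t ∈ S, ∑ s ∈ S, (if t = s then a else b) = #S * (a + (#S - 1) * b) := by
  have hrow : ∀ t ∈ S, ∑ s ∈ S, (if t = s then a else b) = a + (#S - 1) * b := fun t ht =>
    calc ∑ s ∈ S, (if t = s then a else b)
        = ∑ s ∈ S, ((if t = s then a - b else 0) + b) :=
          sum_congr rfl fun s _ => by split_ifs <;> ring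
      _ = a + (#S - 1) * b := by
          rw [sum_add_distrib, sum_ite_eq, if_pos ht, sum_const, nsmul_eq_mul]; ring
  rw [sum_congr rfl hrow, sum_const, nsmul_eq_mul]

section Integral

variable {Ω : Type*} [MeasurableSpace Ω] {μ : Measure Ω}

theorem integral_sq_const_mul_sum {ι : Type*} (S : Finset ι) (c : ℝ) (f : ι → Ω → ℝ)
    (hf : ∀ t ∈ S, ∀ s ∈ S, Integrable (fun ω => f t ω * f s ω) μ) :
    ∫ ω, (c * ∑ t ∈ S, f t ω) ^ 2 ∂μ = c ^ 2 * ∑ t ∈ S, ∑ s ∈ S, ∫ ω, f t ω * f s ω ∂μ := by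
  simp_rw [mul_pow, sq, sum_mul_sum]
  rw [integral_const_mul, integral_finsetSum _ fun t ht => integrable_finsetSum _ (hf t ht)]
  congr 1
  exact sum_congr rfl fun t ht => integral_finsetSum _ (hf t ht)

theorem integrable_mul_mul_mul_of_memLp_four {f g h k : Ω → ℝ} (hf : MemLp f 4 μ)
    (hg : MemLp g 4 μ) (hh : MemLp h 4 μ) (hk : MemLp k 4 μ) :
    Integrable (fun ω => f ω * g ω * (h ω * k ω)) μ :=
  (hg.mul' hf (r := 2)).integrable_mul (hk.mul' hh (r := 2))

theorem IdentDistrib.prodMk_of_indepFun {Ω' α β : Type*} [MeasurableSpace Ω'] {ν : Measure Ω'}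
    [MeasurableSpace α] [MeasurableSpace β] [IsFiniteMeasure μ] [IsFiniteMeasure ν]
    {f : Ω → α} {g : Ω → β} {f' : Ω' → α} {g' : Ω' → β}
    (hf : IdentDistrib f f' μ ν) (hg : IdentDistrib g g' μ ν)
    (hfg : IndepFun f g μ) (hfg' : IndepFun f' g' ν) :
    IdentDistrib (fun ω => (f ω, g ω)) (fun ω => (f' ω, g' ω)) μ ν where
  aemeasurable_fst := hf.aemeasurable_fst.prodMk hg.aemeasurable_fst
  aemeasurable_snd := hf.aemeasurable_snd.prodMk hg.aemeasurable_snd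
  map_eq := by
    rw [(indepFun_iff_map_prod_eq_prod_map_map hf.aemeasurable_fst hg.aemeasurable_fst).1 hfg,
      (indepFun_iff_map_prod_eq_prod_map_map hf.aemeasurable_snd hg.aemeasurable_snd).1 hfg',
      hf.map_eq, hg.map_eq]

end Integral

/- `crossTerm` refers to the product `Y_k Y_t K_{tk} · Y_k Y_s K_{sk}` of two summands of `B₄`. -/
section Model

variable {Ω ι : Type*} {p : ℕ} {X : ι → Ω → Fin p → ℝ} {Y : ι → Ω → ℝ} {K : ι → ι → Ω → ℝ}

theorem crossTerm_eq_sum (hK : ∀ t s ω, K t s ω = (1 / (p : ℝ)) * ∑ j, X t ω j * X s ω j)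
    (t s k : ι) :
    (fun ω => Y k ω * Y t ω * K t k ω * (Y k ω * Y s ω * K s k ω))
      = fun ω => (1 / (p : ℝ)) ^ 2 * ∑ j, ∑ l,
          Y t ω * X t ω j * (Y s ω * X s ω l) * (Y k ω * X k ω j * (Y k ω * X k ω l)) := by
  ext ω
  simp only [hK, mul_sum, sum_mul]
  rw [sum_comm]
  exact sum_congr rfl fun j _ => sum_congr rfl fun l _ => by ring

variable [MeasurableSpace Ω] {μ : Measure Ω}

theorem indepFun_pair_moment_moment (hmeas : ∀ i, Measurable (fun ω => (X i ω, Y i ω)))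
    (hindep : iIndepFun (fun i ω => (X i ω, Y i ω)) μ) {t s k : ι} (ht : t ≠ k) (hs : s ≠ k)
    (j l j' l' : Fin p) :
    IndepFun (fun ω => Y t ω * X t ω j * (Y s ω * X s ω l))
      (fun ω => Y k ω * X k ω j' * (Y k ω * X k ω l')) μ :=
  (hindep.indepFun_prodMk hmeas t s k ht hs).comp
    (φ := fun z : ((Fin p → ℝ) × ℝ) × ((Fin p → ℝ) × ℝ) => z.1.2 * z.1.1 j * (z.2.2 * z.2.1 l))
    (ψ := fun z : (Fin p → ℝ) × ℝ => z.2 * z.1 j' * (z.2 * z.1 l')) (by fun_prop) (by fun_prop)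

theorem integrable_pair_moment_mul_moment
    (hmeas : ∀ i, Measurable (fun ω => (X i ω, Y i ω)))
    (hindep : iIndepFun (fun i ω => (X i ω, Y i ω)) μ)
    (hX4 : ∀ i j, MemLp (fun ω => X i ω j) 4 μ) (hY4 : ∀ i, MemLp (Y i) 4 μ)
    {t s k : ι} (ht : t ≠ k) (hs : s ≠ k) (j l : Fin p) :
    Integrable (fun ω => Y t ω * X t ω j * (Y s ω * X s ω l)
      * (Y k ω * X k ω j * (Y k ω * X k ω l))) μ :=
  (indepFun_pair_moment_moment hmeas hindep ht hs j l j l).integrable_mul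
    (integrable_mul_mul_mul_of_memLp_four (hY4 t) (hX4 t j) (hY4 s) (hX4 s l))
    (integrable_mul_mul_mul_of_memLp_four (hY4 k) (hX4 k j) (hY4 k) (hX4 k l))

theorem integrable_crossTerm (hK : ∀ t s ω, K t s ω = (1 / (p : ℝ)) * ∑ j, X t ω j * X s ω j)
    (hmeas : ∀ i, Measurable (fun ω => (X i ω, Y i ω)))
    (hindep : iIndepFun (fun i ω => (X i ω, Y i ω)) μ)
    (hX4 : ∀ i j, MemLp (fun ω => X i ω j) 4 μ) (hY4 : ∀ i, MemLp (Y i) 4 μ)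
    {t s k : ι} (ht : t ≠ k) (hs : s ≠ k) :
    Integrable (fun ω => Y k ω * Y t ω * K t k ω * (Y k ω * Y s ω * K s k ω)) μ := by
  rw [crossTerm_eq_sum hK]
  exact (integrable_finsetSum _ fun j _ => integrable_finsetSum _ fun l _ =>
    integrable_pair_moment_mul_moment hmeas hindep hX4 hY4 ht hs j l).const_mul _

theorem integral_crossTerm (hK : ∀ t s ω, K t s ω = (1 / (p : ℝ)) * ∑ j, X t ω j * X s ω j)
    (hmeas : ∀ i, Measurable (fun ω => (X i ω, Y i ω)))
    (hindep : iIndepFun (fun i ω => (X i ω, Y i ω)) μ)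
    (hX4 : ∀ i j, MemLp (fun ω => X i ω j) 4 μ) (hY4 : ∀ i, MemLp (Y i) 4 μ)
    {t s k : ι} (ht : t ≠ k) (hs : s ≠ k) :
    ∫ ω, Y k ω * Y t ω * K t k ω * (Y k ω * Y s ω * K s k ω) ∂μ
      = (1 / (p : ℝ)) ^ 2 * ∑ j, ∑ l, (∫ ω, Y t ω * X t ω j * (Y s ω * X s ω l) ∂μ)
          * ∫ ω, Y k ω * X k ω j * (Y k ω * X k ω l) ∂μ := by
  have hint := integrable_pair_moment_mul_moment hmeas hindep hX4 hY4 ht hs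
  rw [crossTerm_eq_sum hK, integral_const_mul,
    integral_finsetSum _ fun j _ => integrable_finsetSum _ fun l _ => hint j l]
  refine congrArg _ (sum_congr rfl fun j _ => ?_)
  rw [integral_finsetSum _ fun l _ => hint j l]
  exact sum_congr rfl fun l _ =>
    (indepFun_pair_moment_moment hmeas hindep ht hs j l j l).integral_fun_mul_eq_mul_integral
      (integrable_mul_mul_mul_of_memLp_four (hY4 t) (hX4 t j) (hY4 s) (hX4 s l)).1
      (integrable_mul_mul_mul_of_memLp_four (hY4 k) (hX4 k j) (hY4 k) (hX4 k l)).1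

theorem integral_crossTerm_self [IsFiniteMeasure μ]
    (hK : ∀ t s ω, K t s ω = (1 / (p : ℝ)) * ∑ j, X t ω j * X s ω j)
    (hindep : iIndepFun (fun i ω => (X i ω, Y i ω)) μ) {a b : ι}
    (hident : ∀ i, IdentDistrib (fun ω => (X i ω, Y i ω)) (fun ω => (X a ω, Y a ω)) μ μ)
    (hab : a ≠ b) {t k : ι} (ht : t ≠ k) :
    ∫ ω, Y k ω * Y t ω * K t k ω * (Y k ω * Y t ω * K t k ω) ∂μ
      = ∫ ω, Y a ω ^ 2 * Y b ω ^ 2 * K a b ω ^ 2 ∂μ := by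
  have hpair := IdentDistrib.prodMk_of_indepFun ((hident t).trans (hident a).symm)
    ((hident k).trans (hident b).symm) (hindep.indepFun ht) (hindep.indepFun hab)
  have h := (hpair.comp (u := fun z : ((Fin p → ℝ) × ℝ) × ((Fin p → ℝ) × ℝ) =>
    z.1.2 ^ 2 * z.2.2 ^ 2 * ((1 / (p : ℝ)) * ∑ j, z.1.1 j * z.2.1 j) ^ 2) (by fun_prop)).integral_eq
  simp only [Function.comp_def, ← hK] at h
  rw [← h]
  congr 1 with ω
  ring

theorem integral_crossTerm_of_ne (hK : ∀ t s ω, K t s ω = (1 / (p : ℝ)) * ∑ j, X t ω j * X s ω j)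
    (hmeas : ∀ i, Measurable (fun ω => (X i ω, Y i ω)))
    (hindep : iIndepFun (fun i ω => (X i ω, Y i ω)) μ) {a : ι}
    (hident : ∀ i, IdentDistrib (fun ω => (X i ω, Y i ω)) (fun ω => (X a ω, Y a ω)) μ μ)
    (hX4 : ∀ i j, MemLp (fun ω => X i ω j) 4 μ) (hY4 : ∀ i, MemLp (Y i) 4 μ)
    {ρ : Fin p → ℝ} (hρ : ∀ j, ρ j = ∫ ω, X a ω j * Y a ω ∂μ)
    {t s k : ι} (ht : t ≠ k) (hs : s ≠ k) (hts : t ≠ s) :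
    ∫ ω, Y k ω * Y t ω * K t k ω * (Y k ω * Y s ω * K s k ω) ∂μ
      = ∫ ω, Y a ω ^ 2 * (∑ j, ρ j * X a ω j / (p : ℝ)) ^ 2 ∂μ := by
  have hρ' : ∀ i j, ∫ ω, Y i ω * X i ω j ∂μ = ρ j := fun i j => by
    simpa only [hρ, Function.comp_def, mul_comm] using ((hident i).comp
      (u := fun z : (Fin p → ℝ) × ℝ => z.2 * z.1 j) (by fun_prop)).integral_eq
  have hcross : ∀ j l, ∫ ω, Y t ω * X t ω j * (Y s ω * X s ω l) ∂μ = ρ j * ρ l := fun j l => by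
    rw [← hρ' t j, ← hρ' s l]
    exact ((hindep.indepFun hts).comp (φ := fun z : (Fin p → ℝ) × ℝ => z.2 * z.1 j)
      (ψ := fun z : (Fin p → ℝ) × ℝ => z.2 * z.1 l) (by fun_prop)
      (by fun_prop)).integral_fun_mul_eq_mul_integral
      ((hY4 t).1.mul (hX4 t j).1) ((hY4 s).1.mul (hX4 s l).1)
  have hsame : ∀ j l, ∫ ω, Y k ω * X k ω j * (Y k ω * X k ω l) ∂μ
      = ∫ ω, Y a ω * X a ω j * (Y a ω * X a ω l) ∂μ := fun j l =>
    ((hident k).comp (u := fun z : (Fin p → ℝ) × ℝ => z.2 * z.1 j * (z.2 * z.1 l))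
      (by fun_prop)).integral_eq
  have hexpand : (fun ω => Y a ω ^ 2 * (∑ j, ρ j * X a ω j / (p : ℝ)) ^ 2)
      = fun ω => (1 / (p : ℝ)) ^ 2 * ∑ j, ∑ l,
          ρ j * ρ l * (Y a ω * X a ω j * (Y a ω * X a ω l)) := by
    ext ω
    simp only [sq, mul_sum, sum_mul]
    exact sum_congr rfl fun j _ => sum_congr rfl fun l _ => by ring
  have hint : ∀ j l, Integrable (fun ω => Y a ω * X a ω j * (Y a ω * X a ω l)) μ := fun j l =>
    integrable_mul_mul_mul_of_memLp_four (hY4 a) (hX4 a j) (hY4 a) (hX4 a l)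
  rw [integral_crossTerm hK hmeas hindep hX4 hY4 ht hs, hexpand, integral_const_mul,
    integral_finsetSum _ fun j _ => integrable_finsetSum _ fun l _ => (hint j l).const_mul _]
  refine congrArg _ (sum_congr rfl fun j _ => ?_)
  rw [integral_finsetSum _ fun l _ => (hint j l).const_mul _]
  exact sum_congr rfl fun l _ => by rw [hcross, hsame, integral_const_mul]

end Model

theorem second_moment_of_B4_general
    {Ω : Type*} [MeasurableSpace Ω] (μ : Measure Ω) [IsProbabilityMeasure μ]
    (n p : ℕ) (hn : 3 ≤ n)
    (k a b : Fin n) (hab : a ≠ b)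
    (X : Fin n → Ω → Fin p → ℝ) (Y : Fin n → Ω → ℝ)
    (hmeas : ∀ i, Measurable (fun ω => (X i ω, Y i ω)))
    (hindep : iIndepFun (fun i ω => (X i ω, Y i ω)) μ)
    (hident : ∀ i, IdentDistrib (fun ω => (X i ω, Y i ω))
      (fun ω => (X a ω, Y a ω)) μ μ)
    (hX4 : ∀ i j, MemLp (fun ω => X i ω j) 4 μ)
    (hY4 : ∀ i, MemLp (Y i) 4 μ)
    (ρ : Fin p → ℝ) (hρ : ∀ j, ρ j = ∫ ω, X a ω j * Y a ω ∂μ)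
    (K : Fin n → Fin n → Ω → ℝ)
    (hK : ∀ t s ω, K t s ω = (1 / (p : ℝ)) * ∑ j, X t ω j * X s ω j)
    (B₄ : Ω → ℝ)
    (hB₄ : ∀ ω, B₄ ω = (1 / ((n : ℝ) * ((n : ℝ) - 1) ^ 2)) *
      ∑ t ∈ univ.erase k, Y k ω * Y t ω * K t k ω)
    (C₁ C₂ : ℝ)
    (hC₁ : C₁ = ∫ ω, (Y a ω) ^ 2 * (Y b ω) ^ 2 * (K a b ω) ^ 2 ∂μ)
    (hC₂ : C₂ = ∫ ω, (Y a ω) ^ 2 * (∑ j, ρ j * X a ω j / (p : ℝ)) ^ 2 ∂μ) :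
    ∫ ω, (B₄ ω) ^ 2 ∂μ
      = (1 / ((n : ℝ) ^ 2 * ((n : ℝ) - 1) ^ 3)) * C₁
        + (((n : ℝ) - 2) / ((n : ℝ) ^ 2 * ((n : ℝ) - 1) ^ 3)) * C₂ := by
  have hterm : ∀ t ∈ univ.erase k, ∀ s ∈ univ.erase k,
      ∫ ω, Y k ω * Y t ω * K t k ω * (Y k ω * Y s ω * K s k ω) ∂μ
        = if t = s then C₁ else C₂ := by
    intro t ht s hs
    split_ifs with hts
    · rw [hts, hC₁]
      exact integral_crossTerm_self hK hindep hident hab (ne_of_mem_erase hs)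
    · rw [hC₂]
      exact integral_crossTerm_of_ne hK hmeas hindep hident hX4 hY4 hρ (ne_of_mem_erase ht)
        (ne_of_mem_erase hs) hts
  have hn₀ : (n : ℝ) ≠ 0 := by exact_mod_cast (by omega : n ≠ 0)
  have hn₁ : (n : ℝ) - 1 ≠ 0 := by
    rw [sub_ne_zero]; exact_mod_cast (by omega : n ≠ 1)
  simp_rw [hB₄]
  rw [integral_sq_const_mul_sum _ _ _ fun t ht s hs =>
      integrable_crossTerm hK hmeas hindep hX4 hY4 (ne_of_mem_erase ht) (ne_of_mem_erase hs),
    sum_congr rfl fun t ht => sum_congr rfl (hterm t ht), sum_sum_ite_eq_mul,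
    card_erase_of_mem (mem_univ k), card_univ, Fintype.card_fin, Nat.cast_sub (by omega)]
  field_simp
  ring

/-- Second moment of the cross term:
`E(B₄²) = (n²(n-1)³)⁻¹ C₁ + (n-2)(n²(n-1)³)⁻¹ C₂` with
`C₁ = E(Y₁²Y₂²K_{p,12}²)` and `C₂ = E[Y₁²(∑_j ρ_j X_{1j}/p)²]`. -/
theorem second_moment_of_B4
    {Ω : Type*} [MeasurableSpace Ω] (μ : Measure Ω) [IsProbabilityMeasure μ]
    (n p : ℕ) (hn : 3 ≤ n) (hp : 1 ≤ p)
    (k a b : Fin n) (hab : a ≠ b) (hak : a ≠ k) (hbk : b ≠ k)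
    (X : Fin n → Ω → Fin p → ℝ) (Y : Fin n → Ω → ℝ)
    (hmeas : ∀ i, Measurable (fun ω => (X i ω, Y i ω)))
    (hindep : iIndepFun (fun i ω => (X i ω, Y i ω)) μ)
    (hident : ∀ i, IdentDistrib (fun ω => (X i ω, Y i ω))
      (fun ω => (X a ω, Y a ω)) μ μ)
    (hX4 : ∀ i j, MemLp (fun ω => X i ω j) 4 μ)
    (hY4 : ∀ i, MemLp (Y i) 4 μ)
    (hXmean : ∀ j, ∫ ω, X a ω j ∂μ = 0)
    (ρ : Fin p → ℝ) (hρ : ∀ j, ρ j = ∫ ω, X a ω j * Y a ω ∂μ)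
    (K : Fin n → Fin n → Ω → ℝ)
    (hK : ∀ t s ω, K t s ω = (1 / (p : ℝ)) * ∑ j, X t ω j * X s ω j)
    (B₄ : Ω → ℝ)
    (hB₄ : ∀ ω, B₄ ω = (1 / ((n : ℝ) * ((n : ℝ) - 1) ^ 2)) *
      ∑ t ∈ univ.erase k, Y k ω * Y t ω * K t k ω)
    (C₁ C₂ : ℝ)
    (hC₁ : C₁ = ∫ ω, (Y a ω) ^ 2 * (Y b ω) ^ 2 * (K a b ω) ^ 2 ∂μ)
    (hC₂ : C₂ = ∫ ω, (Y a ω) ^ 2 * (∑ j, ρ j * X a ω j / (p : ℝ)) ^ 2 ∂μ) :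
    ∫ ω, (B₄ ω) ^ 2 ∂μ
      = (1 / ((n : ℝ) ^ 2 * ((n : ℝ) - 1) ^ 3)) * C₁
        + (((n : ℝ) - 2) / ((n : ℝ) ^ 2 * ((n : ℝ) - 1) ^ 3)) * C₂ :=
  second_moment_of_B4_general μ n p hn k a b hab X Y hmeas hindep hident hX4 hY4 ρ hρ K hK B₄ hB₄ C₁
    C₂ hC₁ hC₂
end
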